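/- arXiv:1102.1952 — 2 statements merged into one kernel-verified Lean document; each statement's English description precedes it below -/
import Mathlib

section
/- Assume Condition (A): there exists λ > 0 such that c_k ≤ λ·σ(k) for all k ≥ 0. Then there exists a constant c > 0 such that for all u > 1, T(u) ≤ Λ(u) ≤ c · T(u); that is, the isospectral profile Λ and the function T are factor-equivalent at infinity. -/
open scoped BigOperators Classical

/-- The bottom of the Dirichlet spectrum of `I - P` on a finite set `U`:
`λ₁(U) = inf { ((I-P)f, f)/‖f‖² : f ≠ 0, supp f ⊆ U }`. -/
noncomputable def lamOne {G : Type*} [Group G]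
    (P : (G → ℝ) → G → ℝ) (U : Finset G) : ℝ :=
  sInf {r : ℝ | ∃ f : G → ℝ, (∀ x ∉ U, f x = 0) ∧ f ≠ 0 ∧
    r = (∑' x : G, (f x - P f x) * f x) / ∑' x : G, (f x) ^ 2}

/-- The `L²`-isospectral profile `Λ(v) = inf { λ₁(U) : U finite nonempty, |U| ≤ v }`. -/
noncomputable def isoProfile {G : Type*} [Group G]
    (P : (G → ℝ) → G → ℝ) (v : ℝ) : ℝ :=
  sInf {r : ℝ | ∃ U : Finset G, U.Nonempty ∧ ((U.card : ℝ)) ≤ v ∧ r = lamOne P U}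

/-!
For `f` supported on `U`, `⟨Pf, f⟩ = ∑ c_k ⟨f * m_k, f⟩`. Each row of the kernel
`m_k (y⁻¹ x)` restricted to `U` has at most `min |G_k| |U|` nonzero entries, all equal to
`1 / |G_k|`, so a Schur test gives `⟨f * m_k, f⟩ ≤ min 1 (|U| / |G_k|) ‖f‖²`; hence
`λ₁(U) ≥ T(|U|) ≥ T(u)`.

Conversely the indicator of `G_k` has Rayleigh quotient at most `σ(k)`. As `|G_{k+1}| ≥ 2 |G_k|`,
if `|G_k| ≤ u < |G_{k+1}|` then every level `i ≥ k + 2` has `|G_i| ≥ 2u`, so `T(u) ≥ σ(k+1) / 2`,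
while Condition (A) gives `σ(k) = c_{k+1} + σ(k+1) ≤ (1 + λ) σ(k+1)`. For `u < |G_0|` a single
point has Rayleigh quotient at most `1` and `T(u) ≥ σ(0) / 2`.
-/

section Development

open Finset

lemma sum_sq_pos_of_ne_zero {α : Type*} {U : Finset α} {f : α → ℝ} (hf : ∀ x ∉ U, f x = 0)
    (hfne : f ≠ 0) : 0 < ∑ x ∈ U, f x ^ 2 := by
  obtain ⟨x, hx⟩ := Function.ne_iff.mp hfne
  have hxU : x ∈ U := by_contra fun h => hx (hf x h)
  exact sum_pos' (fun y _ => sq_nonneg (f y)) ⟨x, hxU, sq_pos_of_ne_zero hx⟩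

lemma indicator_one_ne_zero {α : Type*} {U : Finset α} (hU : U.Nonempty) :
    (U : Set α).indicator (1 : α → ℝ) ≠ 0 := fun h => by
  obtain ⟨x, hx⟩ := hU
  exact (Set.indicator_eq_zero_iff_notMem ℝ).mp (congrFun h x) hx

variable {G : Type*} [Group G]

noncomputable def uniformDensity (K : Subgroup G) (x : G) : ℝ :=
  if x ∈ K then (Nat.card K : ℝ)⁻¹ else 0

section UniformDensity

variable (K : Subgroup G)

lemma uniformDensity_nonneg (x : G) : 0 ≤ uniformDensity K x := by
  unfold uniformDensity; split_ifs <;> positivity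

lemma uniformDensity_le_one (x : G) : uniformDensity K x ≤ 1 := by
  unfold uniformDensity
  split_ifs
  · rcases (Nat.card K).eq_zero_or_pos with h | h
    · simp [h]
    · exact inv_le_one_of_one_le₀ (by exact_mod_cast h)
  · exact zero_le_one

lemma uniformDensity_inv (x : G) : uniformDensity K x⁻¹ = uniformDensity K x := by
  simp only [uniformDensity, inv_mem_iff]

lemma sum_uniformDensity_inv_mul (U : Finset G) (x : G) :
    ∑ y ∈ U, uniformDensity K (y⁻¹ * x) = #{y ∈ U | y⁻¹ * x ∈ K} / Nat.card K := by
  simp only [uniformDensity, ← sum_filter, sum_const, nsmul_eq_mul, div_eq_mul_inv]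

def filterInvMulToSubgroup (U : Finset G) (x : G) : {y // y ∈ ({y ∈ U | y⁻¹ * x ∈ K})} → K :=
  fun y => ⟨y.1⁻¹ * x, (mem_filter.mp y.2).2⟩

lemma filterInvMulToSubgroup_injective (U : Finset G) (x : G) :
    Function.Injective (filterInvMulToSubgroup K U x) := by
  intro y z h
  exact Subtype.ext (inv_injective (mul_right_cancel (congrArg Subtype.val h)))

variable [Finite K]

lemma sum_uniformDensity_inv_mul_le (U : Finset G) (x : G) :
    ∑ y ∈ U, uniformDensity K (y⁻¹ * x) ≤ min 1 ((#U : ℝ) / Nat.card K) := by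
  have hK : (0 : ℝ) < Nat.card K := by exact_mod_cast Nat.card_pos
  rw [sum_uniformDensity_inv_mul, ← div_self hK.ne', min_div_div_right hK.le]
  gcongr
  refine le_min ?_ (by exact_mod_cast card_filter_le _ _)
  rw [← Nat.card_eq_finsetCard]
  exact_mod_cast Nat.card_le_card_of_injective _ (filterInvMulToSubgroup_injective K U x)

lemma sum_uniformDensity_inv_mul_eq_one (U : Finset G) (x : G) (hU : ∀ k ∈ K, x * k ∈ U) :
    ∑ y ∈ U, uniformDensity K (y⁻¹ * x) = 1 := by
  have hK : (0 : ℝ) < Nat.card K := by exact_mod_cast Nat.card_pos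
  rw [sum_uniformDensity_inv_mul, div_eq_one_iff_eq hK.ne', ← Nat.card_eq_finsetCard]
  norm_cast
  refine Nat.card_eq_of_bijective _ ⟨filterInvMulToSubgroup_injective K U x, fun k => ?_⟩
  refine ⟨⟨x * k.1⁻¹, mem_filter.mpr ⟨hU _ (K.inv_mem k.2), by simp⟩⟩, Subtype.ext ?_⟩
  simp [filterInvMulToSubgroup]

end UniformDensity

/-- `⟨f * m_K, f⟩` for `f` supported on `U`. -/
noncomputable def uniformForm (K : Subgroup G) (U : Finset G) (f : G → ℝ) : ℝ :=
  ∑ x ∈ U, ∑ y ∈ U, f x * f y * uniformDensity K (y⁻¹ * x)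

section UniformForm

variable (K : Subgroup G) (U : Finset G) (f : G → ℝ)

lemma uniformForm_nonneg (hf : ∀ x, 0 ≤ f x) : 0 ≤ uniformForm K U f :=
  sum_nonneg fun x _ => sum_nonneg fun y _ =>
    mul_nonneg (mul_nonneg (hf x) (hf y)) (uniformDensity_nonneg K _)

/-- Schur test: `2 f x f y ≤ f x ^ 2 + f y ^ 2` and the kernel is symmetric, so the form is
bounded by the largest row sum of the kernel. -/
lemma uniformForm_le [Finite K] :
    uniformForm K U f ≤ min 1 ((#U : ℝ) / Nat.card K) * ∑ x ∈ U, f x ^ 2 := by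
  have hsymm : ∑ x ∈ U, ∑ y ∈ U, f y ^ 2 * uniformDensity K (y⁻¹ * x)
      = ∑ x ∈ U, ∑ y ∈ U, f x ^ 2 * uniformDensity K (y⁻¹ * x) := by
    rw [sum_comm]
    refine sum_congr rfl fun x _ => sum_congr rfl fun y _ => ?_
    rw [← uniformDensity_inv, mul_inv_rev, inv_inv]
  calc uniformForm K U f
      ≤ ∑ x ∈ U, ∑ y ∈ U, (f x ^ 2 + f y ^ 2) / 2 * uniformDensity K (y⁻¹ * x) := by
        refine sum_le_sum fun x _ => sum_le_sum fun y _ => ?_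
        gcongr
        · exact uniformDensity_nonneg K _
        · nlinarith [sq_nonneg (f x - f y)]
    _ = ∑ x ∈ U, f x ^ 2 * ∑ y ∈ U, uniformDensity K (y⁻¹ * x) := by
        simp only [add_div, add_mul, sum_add_distrib, div_mul_eq_mul_div, ← sum_div, hsymm,
          mul_sum]
        ring
    _ ≤ ∑ x ∈ U, f x ^ 2 * min 1 ((#U : ℝ) / Nat.card K) := by
        gcongr with x
        exact sum_uniformDensity_inv_mul_le K U x
    _ = min 1 ((#U : ℝ) / Nat.card K) * ∑ x ∈ U, f x ^ 2 := by
        rw [← sum_mul, mul_comm]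

lemma uniformForm_eq_card [Finite K] (hU : ∀ x ∈ U, ∀ k ∈ K, x * k ∈ U)
    (hf : ∀ x ∈ U, f x = 1) : uniformForm K U f = #U := by
  calc uniformForm K U f = ∑ x ∈ U, ∑ y ∈ U, uniformDensity K (y⁻¹ * x) := by
        refine sum_congr rfl fun x hx => sum_congr rfl fun y hy => ?_
        rw [hf x hx, hf y hy, one_mul, one_mul]
    _ = #U := by
        rw [sum_congr rfl fun x hx => sum_uniformDensity_inv_mul_eq_one K U x (hU x hx)]
        simp

end UniformForm

noncomputable def uniformMixture (H : ℕ → Subgroup G) (c : ℕ → ℝ) (z : G) : ℝ :=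
  ∑' k, c k * uniformDensity (H k) z

noncomputable def convolutionOp (μ : G → ℝ) (g : G → ℝ) (x : G) : ℝ :=
  ∑' y, g y * μ (y⁻¹ * x)

noncomputable def rayleighQuotient (P : (G → ℝ) → G → ℝ) (f : G → ℝ) : ℝ :=
  (∑' x, (f x - P f x) * f x) / ∑' x, f x ^ 2

section Rayleigh

variable {H : ℕ → Subgroup G} {c : ℕ → ℝ} {U : Finset G} {f : G → ℝ}

lemma summable_mul_uniformDensity (hc : ∀ k, 0 ≤ c k) (hcs : Summable c) (z : G) :
    Summable fun k => c k * uniformDensity (H k) z :=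
  hcs.of_nonneg_of_le (fun k => mul_nonneg (hc k) (uniformDensity_nonneg _ z))
    fun k => mul_le_of_le_one_right (hc k) (uniformDensity_le_one _ z)

lemma convolutionOp_eq_sum (μ : G → ℝ) (hf : ∀ x ∉ U, f x = 0) (x : G) :
    convolutionOp μ f x = ∑ y ∈ U, f y * μ (y⁻¹ * x) :=
  tsum_eq_sum fun y hy => by rw [hf y hy, zero_mul]

lemma hasSum_mul_uniformForm (hc : ∀ k, 0 ≤ c k) (hcs : Summable c)
    (hf : ∀ x ∉ U, f x = 0) :
    HasSum (fun k => c k * uniformForm (H k) U f)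
      (∑ x ∈ U, convolutionOp (uniformMixture H c) f x * f x) := by
  have hxy : ∀ x y, HasSum (fun k => f x * f y * (c k * uniformDensity (H k) (y⁻¹ * x)))
      (f x * f y * uniformMixture H c (y⁻¹ * x)) := fun x y =>
    (summable_mul_uniformDensity hc hcs _).hasSum.mul_left _
  convert hasSum_sum fun x _ => hasSum_sum fun y _ => hxy x y using 1
  · ext k
    simp only [uniformForm, mul_sum]
    exact sum_congr rfl fun x _ => sum_congr rfl fun y _ => by ring
  · refine sum_congr rfl fun x _ => ?_
    rw [convolutionOp_eq_sum _ hf, sum_mul]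
    exact sum_congr rfl fun y _ => by ring

lemma rayleighQuotient_eq (hc : ∀ k, 0 ≤ c k) (hcs : Summable c) (hf : ∀ x ∉ U, f x = 0)
    (hfne : f ≠ 0) :
    rayleighQuotient (convolutionOp (uniformMixture H c)) f
      = 1 - (∑' k, c k * uniformForm (H k) U f) / ∑ x ∈ U, f x ^ 2 := by
  have hS := sum_sq_pos_of_ne_zero hf hfne
  rw [rayleighQuotient, tsum_eq_sum (s := U) fun x hx => by rw [hf x hx, mul_zero],
    tsum_eq_sum (s := U) fun x hx => by rw [hf x hx, zero_pow two_ne_zero],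
    (hasSum_mul_uniformForm hc hcs hf).tsum_eq, eq_sub_iff_add_eq, ← add_div,
    div_eq_one_iff_eq hS.ne', ← sum_add_distrib]
  exact sum_congr rfl fun x _ => by ring

end Rayleigh

noncomputable def profileT (H : ℕ → Subgroup G) (c : ℕ → ℝ) (u : ℝ) : ℝ :=
  1 - ∑' k, c k * min 1 (u / Nat.card (H k))

section Bounds

variable {H : ℕ → Subgroup G} {c : ℕ → ℝ}

lemma summable_mul_min (hc : ∀ k, 0 ≤ c k) (hcs : Summable c) {u : ℝ} (hu : 0 ≤ u) :
    Summable fun k => c k * min 1 (u / Nat.card (H k)) :=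
  hcs.of_nonneg_of_le (fun k => mul_nonneg (hc k) (le_min zero_le_one (by positivity)))
    fun k => mul_le_of_le_one_right (hc k) (min_le_left _ _)

lemma profileT_le_profileT (hc : ∀ k, 0 ≤ c k) (hcs : Summable c) {u v : ℝ} (hu : 0 ≤ u)
    (huv : u ≤ v) : profileT H c v ≤ profileT H c u := by
  unfold profileT
  gcongr ?_ - ?_
  refine (summable_mul_min hc hcs hu).tsum_le_tsum (fun k => ?_)
    (summable_mul_min hc hcs (hu.trans huv))
  gcongr
  exact hc k

lemma profileT_nonneg (hc : ∀ k, 0 ≤ c k) (hcs : Summable c) (hcsum : ∑' k, c k = 1)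
    {u : ℝ} (hu : 0 ≤ u) : 0 ≤ profileT H c u := by
  refine sub_nonneg.mpr (le_of_le_of_eq ?_ hcsum)
  exact (summable_mul_min hc hcs hu).tsum_le_tsum
    (fun k => mul_le_of_le_one_right (hc k) (min_le_left _ _)) hcs

lemma profileT_le_rayleighQuotient [∀ k, Finite (H k)] (hc : ∀ k, 0 ≤ c k)
    (hcs : Summable c) {u : ℝ} (U : Finset G) (hU : (#U : ℝ) ≤ u) (f : G → ℝ)
    (hf : ∀ x ∉ U, f x = 0) (hfne : f ≠ 0) :
    profileT H c u ≤ rayleighQuotient (convolutionOp (uniformMixture H c)) f := by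
  refine (profileT_le_profileT hc hcs (Nat.cast_nonneg _) hU).trans ?_
  have hS := sum_sq_pos_of_ne_zero hf hfne
  have hmin := summable_mul_min (H := H) hc hcs (Nat.cast_nonneg #U)
  rw [rayleighQuotient_eq hc hcs hf hfne, profileT, sub_le_sub_iff_left, div_le_iff₀ hS,
    ← tsum_mul_right]
  refine (hasSum_mul_uniformForm hc hcs hf).summable.tsum_le_tsum (fun k => ?_)
    (hmin.mul_right _)
  rw [mul_assoc]
  exact mul_le_mul_of_nonneg_left (uniformForm_le _ U f) (hc k)

lemma rayleighQuotient_le_one (hc : ∀ k, 0 ≤ c k) (hcs : Summable c) {U : Finset G}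
    {f : G → ℝ} (hf : ∀ x ∉ U, f x = 0) (hfne : f ≠ 0) (hf0 : ∀ x, 0 ≤ f x) :
    rayleighQuotient (convolutionOp (uniformMixture H c)) f ≤ 1 := by
  rw [rayleighQuotient_eq hc hcs hf hfne, sub_le_self_iff]
  exact div_nonneg (tsum_nonneg fun k => mul_nonneg (hc k) (uniformForm_nonneg _ U f hf0))
    (sum_nonneg fun x _ => sq_nonneg (f x))

end Bounds

section Indicator

variable {H : ℕ → Subgroup G} {c : ℕ → ℝ}

lemma rayleighQuotient_indicator_le [∀ k, Finite (H k)] (hH : Monotone H)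
    (hc : ∀ k, 0 ≤ c k) (hcs : Summable c) {k : ℕ} {U : Finset G} (hU : ∀ x, x ∈ U ↔ x ∈ H k) :
    rayleighQuotient (convolutionOp (uniformMixture H c)) ((U : Set G).indicator 1)
      ≤ 1 - ∑ j ∈ range (k + 1), c j := by
  set f : G → ℝ := (U : Set G).indicator 1
  have hf : ∀ x ∉ U, f x = 0 := fun x hx => Set.indicator_of_notMem hx _
  have hf1 : ∀ x ∈ U, f x = 1 := fun x hx => Set.indicator_of_mem hx _
  have hfne : f ≠ 0 := indicator_one_ne_zero ⟨1, (hU 1).mpr (H k).one_mem⟩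
  have hS : ∑ x ∈ U, f x ^ 2 = #U := by
    rw [sum_congr rfl fun x hx => by rw [hf1 x hx, one_pow]]
    simp
  have hform : ∀ j ≤ k, uniformForm (H j) U f = #U := fun j hj =>
    uniformForm_eq_card _ _ _ (fun x hx i hi => (hU _).mpr <|
      (H k).mul_mem ((hU x).mp hx) (hH hj hi)) hf1
  have hsum := hasSum_mul_uniformForm (H := H) hc hcs hf
  have hUpos : (0 : ℝ) < #U := hS ▸ sum_sq_pos_of_ne_zero hf hfne
  rw [rayleighQuotient_eq hc hcs hf hfne, hS, sub_le_sub_iff_left, le_div_iff₀ hUpos, sum_mul]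
  calc ∑ j ∈ range (k + 1), c j * #U
      = ∑ j ∈ range (k + 1), c j * uniformForm (H j) U f :=
        sum_congr rfl fun j hj => by rw [hform j (Nat.lt_succ_iff.mp (mem_range.mp hj))]
    _ ≤ ∑' j, c j * uniformForm (H j) U f :=
        hsum.summable.sum_le_tsum _ fun j _ => mul_nonneg (hc j) <|
          uniformForm_nonneg _ _ _ (Set.indicator_nonneg fun _ _ => zero_le_one)

end Indicator

noncomputable def tailMass (c : ℕ → ℝ) (k : ℕ) : ℝ := ∑' i, c (k + 1 + i)

section Tail

variable {c : ℕ → ℝ}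

lemma tailMass_eq_one_sub (hcs : Summable c) (hcsum : ∑' k, c k = 1) (k : ℕ) :
    tailMass c k = 1 - ∑ j ∈ range (k + 1), c j := by
  rw [← hcsum, ← hcs.sum_add_tsum_nat_add (k + 1), tailMass]
  simp only [add_comm (k + 1), add_sub_cancel_left]

lemma tailMass_pos (hc : ∀ k, 0 < c k) (hcs : Summable c) (k : ℕ) : 0 < tailMass c k := by
  simp only [tailMass, add_comm (k + 1)]
  exact ((summable_nat_add_iff (k + 1)).mpr hcs).tsum_pos (fun i => (hc _).le) 0 (hc _)

lemma tailMass_eq_add (hcs : Summable c) (hcsum : ∑' k, c k = 1) (k : ℕ) :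
    tailMass c k = c (k + 1) + tailMass c (k + 1) := by
  rw [tailMass_eq_one_sub hcs hcsum, tailMass_eq_one_sub hcs hcsum, sum_range_succ _ (k + 1)]
  ring

/-- `T u = ∑ c_i (1 - min 1 (u / |H_i|))`, and every level above `k` contributes at least
`c_i / 2`. -/
lemma half_tailMass_le_profileT {H : ℕ → Subgroup G} (hc : ∀ k, 0 ≤ c k) (hcs : Summable c)
    (hcsum : ∑' k, c k = 1) {u : ℝ} (hu : 0 ≤ u) {k : ℕ}
    (hbig : ∀ i, k < i → 2 * u ≤ Nat.card (H i)) :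
    tailMass c k / 2 ≤ profileT H c u := by
  let d : ℕ → ℝ := fun i => c i - c i * min 1 (u / Nat.card (H i))
  have hmin := summable_mul_min (H := H) hc hcs hu
  have hds : Summable d := hcs.sub hmin
  have hd0 : ∀ i, 0 ≤ d i := fun i =>
    sub_nonneg.mpr (mul_le_of_le_one_right (hc i) (min_le_left _ _))
  have hhalf : ∀ i, c (i + (k + 1)) / 2 ≤ d (i + (k + 1)) := fun i => by
    have hle : u / Nat.card (H (i + (k + 1))) ≤ 1 / 2 :=
      div_le_of_le_mul₀ (Nat.cast_nonneg _) (by norm_num) <| by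
        linarith [hbig (i + (k + 1)) (by omega)]
    have := mul_le_mul_of_nonneg_left ((min_le_right (1 : ℝ) _).trans hle) (hc (i + (k + 1)))
    simp only [d]
    linarith
  have hT : profileT H c u = ∑' i, d i := by
    rw [profileT, hcs.tsum_sub hmin, hcsum]
  have htail := Summable.tsum_le_tsum hhalf
    (((summable_nat_add_iff (k + 1)).mpr hcs).div_const 2) ((summable_nat_add_iff (k + 1)).mpr hds)
  rw [hT, ← hds.sum_add_tsum_nat_add (k + 1), tailMass, ← tsum_div_const]
  simp only [add_comm (k + 1)]
  linarith [sum_nonneg fun i (_ : i ∈ range (k + 1)) => hd0 i]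

end Tail

section IsoProfile

variable {P : (G → ℝ) → G → ℝ} {b v : ℝ}

lemma le_lamOne {U : Finset G} (hU : U.Nonempty)
    (hb : ∀ f : G → ℝ, (∀ x ∉ U, f x = 0) → f ≠ 0 → b ≤ rayleighQuotient P f) :
    b ≤ lamOne P U := by
  refine le_csInf ?_ ?_
  · exact ⟨_, _, fun x hx => Set.indicator_of_notMem hx 1, indicator_one_ne_zero hU, rfl⟩
  · rintro r ⟨f, hf, hfne, rfl⟩
    exact hb f hf hfne

lemma lamOne_le_rayleighQuotient {U : Finset G}
    (hb : ∀ f : G → ℝ, (∀ x ∉ U, f x = 0) → f ≠ 0 → b ≤ rayleighQuotient P f)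
    {f : G → ℝ} (hf : ∀ x ∉ U, f x = 0) (hfne : f ≠ 0) :
    lamOne P U ≤ rayleighQuotient P f :=
  csInf_le ⟨b, by rintro r ⟨g, hg, hgne, rfl⟩; exact hb g hg hgne⟩ ⟨f, hf, hfne, rfl⟩

lemma le_isoProfile (hv : 1 ≤ v) (hb : ∀ U : Finset G, (#U : ℝ) ≤ v → ∀ f : G → ℝ,
      (∀ x ∉ U, f x = 0) → f ≠ 0 → b ≤ rayleighQuotient P f) :
    b ≤ isoProfile P v := by
  refine le_csInf ?_ ?_
  · exact ⟨_, {1}, singleton_nonempty 1, by simpa using hv, rfl⟩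
  · rintro r ⟨U, hU, hUv, rfl⟩
    exact le_lamOne hU (hb U hUv)

lemma isoProfile_le_rayleighQuotient (hb : ∀ U : Finset G, (#U : ℝ) ≤ v → ∀ f : G → ℝ,
      (∀ x ∉ U, f x = 0) → f ≠ 0 → b ≤ rayleighQuotient P f)
    {U : Finset G} (hUv : (#U : ℝ) ≤ v) {f : G → ℝ} (hf : ∀ x ∉ U, f x = 0) (hfne : f ≠ 0) :
    isoProfile P v ≤ rayleighQuotient P f := by
  have hU : U.Nonempty := nonempty_of_sum_ne_zero (sum_sq_pos_of_ne_zero hf hfne).ne'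
  have hbdd : BddBelow {r | ∃ V : Finset G, V.Nonempty ∧ (#V : ℝ) ≤ v ∧ r = lamOne P V} := by
    refine ⟨b, ?_⟩
    rintro r ⟨V, hV, hVv, rfl⟩
    exact le_lamOne hV (hb V hVv)
  exact (csInf_le hbdd ⟨U, hU, hUv, rfl⟩).trans (lamOne_le_rayleighQuotient (hb U hUv) hf hfne)

end IsoProfile

section Profile

variable {H : ℕ → Subgroup G} {c : ℕ → ℝ} [∀ k, Finite (H k)] {u : ℝ}

lemma profileT_le_isoProfile (hc : ∀ k, 0 ≤ c k) (hcs : Summable c) (hu : 1 ≤ u) :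
    profileT H c u ≤ isoProfile (convolutionOp (uniformMixture H c)) u :=
  le_isoProfile hu (profileT_le_rayleighQuotient hc hcs)

lemma isoProfile_le_one (hc : ∀ k, 0 ≤ c k) (hcs : Summable c) (hu : 1 ≤ u) :
    isoProfile (convolutionOp (uniformMixture H c)) u ≤ 1 := by
  set U : Finset G := {1}
  have hf : ∀ x ∉ U, (U : Set G).indicator (1 : G → ℝ) x = 0 := fun x hx =>
    Set.indicator_of_notMem hx 1
  have hfne := indicator_one_ne_zero (singleton_nonempty (1 : G))
  calc isoProfile (convolutionOp (uniformMixture H c)) u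
      ≤ rayleighQuotient (convolutionOp (uniformMixture H c)) ((U : Set G).indicator 1) :=
        isoProfile_le_rayleighQuotient (profileT_le_rayleighQuotient hc hcs)
          (by simpa [U] using hu) hf hfne
    _ ≤ 1 := rayleighQuotient_le_one hc hcs hf hfne
        (Set.indicator_nonneg fun _ _ => zero_le_one)

lemma isoProfile_le_tailMass (hH : Monotone H) (hc : ∀ k, 0 ≤ c k) (hcs : Summable c)
    (hcsum : ∑' k, c k = 1) {k : ℕ} (hk : (Nat.card (H k) : ℝ) ≤ u) :
    isoProfile (convolutionOp (uniformMixture H c)) u ≤ tailMass c k := by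
  set U := (H k : Set G).toFinite.toFinset
  have hU : ∀ x, x ∈ U ↔ x ∈ H k := fun x => Set.Finite.mem_toFinset _
  rw [tailMass_eq_one_sub hcs hcsum]
  refine (isoProfile_le_rayleighQuotient (profileT_le_rayleighQuotient hc hcs) ?_
    (fun x hx => Set.indicator_of_notMem hx 1)
    (indicator_one_ne_zero ⟨1, (hU 1).mpr (H k).one_mem⟩)).trans
    (rayleighQuotient_indicator_le hH hc hcs hU)
  rwa [← Nat.card_eq_card_finite_toFinset]

end Profile

lemma exists_lt_zero_or_le_lt {a : ℕ → ℝ} {u : ℝ} (h : ∃ k, u < a k) :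
    u < a 0 ∨ ∃ k, a k ≤ u ∧ u < a (k + 1) := by
  rcases hk : Nat.find h with _ | k
  · exact Or.inl (hk ▸ Nat.find_spec h)
  · exact Or.inr ⟨k, not_lt.mp (Nat.find_min h (hk ▸ k.lt_succ_self)), hk ▸ Nat.find_spec h⟩

lemma Subgroup.two_mul_card_le_card_of_lt {K L : Subgroup G} [Finite L] (h : K < L) :
    2 * Nat.card K ≤ Nat.card L := by
  obtain ⟨t, ht⟩ := Subgroup.card_dvd_of_le h.le
  have ht0 : t ≠ 0 := by
    rintro rfl
    exact Nat.card_pos.ne' (ht.trans (mul_zero _))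
  have ht1 : t ≠ 1 := by
    rintro rfl
    exact h.ne (Subgroup.eq_of_le_of_card_ge h.le (by rw [ht, mul_one]))
  rw [ht, mul_comm]
  exact Nat.mul_le_mul_left _ (by omega)

section Levels

variable {H : ℕ → Subgroup G} [∀ k, Finite (H k)] {c : ℕ → ℝ} {u : ℝ}

lemma two_mul_le_card_of_lt_card (hH : StrictMono H) {j : ℕ}
    (hj : u < Nat.card (H j)) (i : ℕ) (hji : j < i) : 2 * u ≤ Nat.card (H i) := by
  have := Subgroup.two_mul_card_le_card_of_lt (hH hji)
  have : (2 * Nat.card (H j) : ℝ) ≤ Nat.card (H i) := by exact_mod_cast this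
  linarith

lemma exists_lt_card (hH : StrictMono H) (u : ℝ) : ∃ k, u < Nat.card (H k) := by
  have hcard : StrictMono fun k => Nat.card (H k) := strictMono_nat_of_lt_succ fun k => by
    have := Subgroup.two_mul_card_le_card_of_lt (hH (Nat.lt_add_one k))
    have : 0 < Nat.card (H k) := Nat.card_pos
    omega
  refine ⟨⌊u⌋₊ + 1, (Nat.lt_floor_add_one u).trans_le ?_⟩
  exact_mod_cast hcard.id_le _

lemma isoProfile_le_of_lt_card_zero (hH : StrictMono H) (hc : ∀ k, 0 < c k) (hcs : Summable c)
    (hcsum : ∑' k, c k = 1) (hu : 1 ≤ u) (hu0 : u < Nat.card (H 0)) :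
    isoProfile (convolutionOp (uniformMixture H c)) u ≤ 2 / tailMass c 0 * profileT H c u := by
  have hc0 : ∀ k, 0 ≤ c k := fun k => (hc k).le
  have hσ := tailMass_pos hc hcs 0
  calc isoProfile (convolutionOp (uniformMixture H c)) u ≤ 1 := isoProfile_le_one hc0 hcs hu
    _ = 2 / tailMass c 0 * (tailMass c 0 / 2) := by field_simp
    _ ≤ 2 / tailMass c 0 * profileT H c u := by
        gcongr
        exact half_tailMass_le_profileT hc0 hcs hcsum (by linarith)
          (two_mul_le_card_of_lt_card hH hu0)

lemma isoProfile_le_of_card_le_lt (hH : StrictMono H) (hc : ∀ k, 0 ≤ c k) (hcs : Summable c)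
    (hcsum : ∑' k, c k = 1) {lam : ℝ} (hlam : 0 ≤ lam) (hA : ∀ k, c k ≤ lam * tailMass c k) {k : ℕ}
    (hk : (Nat.card (H k) : ℝ) ≤ u) (hk1 : u < Nat.card (H (k + 1))) :
    isoProfile (convolutionOp (uniformMixture H c)) u ≤ 2 * (lam + 1) * profileT H c u := by
  have hhalf := half_tailMass_le_profileT hc hcs hcsum ((Nat.cast_nonneg _).trans hk)
    (two_mul_le_card_of_lt_card hH hk1)
  calc isoProfile (convolutionOp (uniformMixture H c)) u ≤ tailMass c k :=
        isoProfile_le_tailMass hH.monotone hc hcs hcsum hk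
    _ = c (k + 1) + tailMass c (k + 1) := tailMass_eq_add hcs hcsum k
    _ ≤ (lam + 1) * tailMass c (k + 1) := by linarith [hA (k + 1)]
    _ ≤ (lam + 1) * (2 * profileT H c u) := by gcongr; linarith
    _ = 2 * (lam + 1) * profileT H c u := by ring

end Levels

end Development

theorem stmt_16_general {G : Type*} [Group G]
    (H : ℕ → Subgroup G) (hfin : ∀ k, (H k : Set G).Finite)
    (hlt : ∀ k, H k < H (k + 1))
    (c : ℕ → ℝ) (hc : ∀ k, 0 < c k) (hcsum : ∑' k : ℕ, c k = 1)
    (m : ℕ → G → ℝ)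
    (hm : ∀ (k : ℕ) (x : G),
      m k x = if x ∈ H k then ((Nat.card (H k) : ℝ))⁻¹ else 0)
    (μ : G → ℝ) (hμ : ∀ x : G, μ x = ∑' k : ℕ, c k * m k x)
    (σ : ℕ → ℝ) (hσ : ∀ k, σ k = ∑' i : ℕ, c (k + 1 + i))
    (lam : ℝ) (hlam : 0 < lam) (hA : ∀ k, c k ≤ lam * σ k)
    (P : (G → ℝ) → G → ℝ)
    (hP : ∀ (g : G → ℝ) (x : G), P g x = ∑' y : G, g y * μ (y⁻¹ * x))
    (T : ℝ → ℝ)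
    (hT : ∀ u : ℝ, T u = 1 - ∑' k : ℕ, c k * min 1 (u / (Nat.card (H k) : ℝ))) :
    ∃ a > (0 : ℝ), ∀ u : ℝ, 1 < u →
      T u ≤ isoProfile P u ∧ isoProfile P u ≤ a * T u := by
  obtain rfl : m = fun k => uniformDensity (H k) := funext fun k => funext (hm k)
  obtain rfl : μ = uniformMixture H c := funext hμ
  obtain rfl : P = convolutionOp (uniformMixture H c) := funext fun g => funext (hP g)
  obtain rfl : σ = tailMass c := funext hσ
  obtain rfl : T = profileT H c := funext hT
  have : ∀ k, Finite (H k) := fun k => (hfin k).to_subtype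
  have hH : StrictMono H := strictMono_nat_of_lt_succ hlt
  have hc0 : ∀ k, 0 ≤ c k := fun k => (hc k).le
  have hcs : Summable c := by
    by_contra h
    simp [tsum_eq_zero_of_not_summable h] at hcsum
  have hσ0 := tailMass_pos hc hcs 0
  refine ⟨2 * (lam + 1) + 2 / tailMass c 0, by positivity, fun u hu =>
    ⟨profileT_le_isoProfile hc0 hcs hu.le, ?_⟩⟩
  have hT0 := profileT_nonneg (H := H) hc0 hcs hcsum (by linarith)
  rcases exists_lt_zero_or_le_lt (exists_lt_card hH u) with hu0 | ⟨k, hk, hk1⟩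
  · refine (isoProfile_le_of_lt_card_zero hH hc hcs hcsum hu.le hu0).trans ?_
    gcongr
    linarith
  · refine (isoProfile_le_of_card_le_lt hH hc0 hcs hcsum hlam.le hA hk hk1).trans ?_
    gcongr
    linarith [div_pos two_pos hσ0]

/-- Theorem 6.7: under Condition (A), `T(u) ≤ Λ(u) ≤ a·T(u)` for all `u > 1`
and some constant `a > 0`, where `T(u) = 1 - ∑_k c_k min(1, u/|G_k|)`. -/
theorem stmt_16 {G : Type*} [Group G]
    (H : ℕ → Subgroup G) (hfin : ∀ k, (H k : Set G).Finite)
    (hlt : ∀ k, H k < H (k + 1)) (hunion : ∀ x : G, ∃ k, x ∈ H k)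
    (c : ℕ → ℝ) (hc : ∀ k, 0 < c k) (hcsum : ∑' k : ℕ, c k = 1)
    (m : ℕ → G → ℝ)
    (hm : ∀ (k : ℕ) (x : G),
      m k x = if x ∈ H k then ((Nat.card (H k) : ℝ))⁻¹ else 0)
    (μ : G → ℝ) (hμ : ∀ x : G, μ x = ∑' k : ℕ, c k * m k x)
    (σ : ℕ → ℝ) (hσ : ∀ k, σ k = ∑' i : ℕ, c (k + 1 + i))
    (lam : ℝ) (hlam : 0 < lam) (hA : ∀ k, c k ≤ lam * σ k)
    (P : (G → ℝ) → G → ℝ)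
    (hP : ∀ (g : G → ℝ) (x : G), P g x = ∑' y : G, g y * μ (y⁻¹ * x))
    (T : ℝ → ℝ)
    (hT : ∀ u : ℝ, T u = 1 - ∑' k : ℕ, c k * min 1 (u / (Nat.card (H k) : ℝ))) :
    ∃ a > (0 : ℝ), ∀ u : ℝ, 1 < u →
      T u ≤ isoProfile P u ∧ isoProfile P u ≤ a * T u :=
  stmt_16_general H hfin hlt c hc hcsum m hm μ hμ σ hσ lam hlam hA P hP T hT
end

section
/- For every t > 0 and every z ∈ G, if z ∈ G_k \ G_{k−1} (with the convention G_{−1} := ∅), then μ_t(z) = t · ∫₀^{σ(k−1)} N(λ) (1−λ)^{t−1} dλ. Equivalently, writing ρ := |z|_σ, the heat kernel h(t; x, y) := μ_t(x⁻¹y) satisfies h(t; x, y) = t · ∫₀^{1/(1+ρ(x,y))} N(λ)(1−λ)^{t−1} dλ. -/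
/-!
Write `a j := ∑_{i ≥ j} c i`, so that `σ (j - 1) = a j`, `S j = 1 - a (j + 1)` and
`C t j = (1 - a (j + 1)) ^ t - (1 - a j) ^ t`. On `[a (j + 1), a j)` the spectral function `N` is
the constant `1 / |G_j|`, and `t ∫ (1 - λ) ^ (t - 1) dλ` over that interval is exactly `C t j`.
As `a j` decreases to `0`, the intervals with `j ≥ k` tile `(0, a k)`, so
`t ∫₀^{a k} N(λ) (1 - λ) ^ (t - 1) dλ = ∑_{j ≥ k} C t j / |G_j|`, which is `μ_t(z)` because
`z ∈ G_j` exactly when `j ≥ k`.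
-/

open MeasureTheory intervalIntegral
open scoped BigOperators Classical

open Filter Set Topology

section OneSubRpow

variable {t : ℝ}

theorem intervalIntegrable_one_sub_rpow (ht : 0 < t) (a b : ℝ) :
    IntervalIntegrable (fun x : ℝ => (1 - x) ^ (t - 1)) volume a b := by
  simpa using (intervalIntegrable_rpow' (a := 1 - a) (b := 1 - b)
    (show (-1 : ℝ) < t - 1 by linarith)).comp_sub_left 1

theorem integral_one_sub_rpow (ht : 0 < t) (a b : ℝ) :
    ∫ x in a..b, (1 - x) ^ (t - 1) = ((1 - a) ^ t - (1 - b) ^ t) / t := by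
  rw [integral_comp_sub_left (fun x : ℝ => x ^ (t - 1)),
    integral_rpow (Or.inl (by linarith)), sub_add_cancel]

theorem integrableOn_Ico_one_sub_rpow (ht : 0 < t) {a b : ℝ} (hab : a ≤ b) :
    IntegrableOn (fun x : ℝ => (1 - x) ^ (t - 1)) (Ico a b) :=
  (intervalIntegrable_iff_integrableOn_Ico_of_le hab).1 (intervalIntegrable_one_sub_rpow ht a b)

theorem setIntegral_Ico_one_sub_rpow (ht : 0 < t) {a b : ℝ} (hab : a ≤ b) :
    ∫ x in Ico a b, (1 - x) ^ (t - 1) = ((1 - a) ^ t - (1 - b) ^ t) / t := by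
  rw [integral_Ico_eq_integral_Ioo, ← integral_Ioc_eq_integral_Ioo, ← integral_of_le hab,
    integral_one_sub_rpow ht]

end OneSubRpow

theorem hasSum_succ_sub_of_tendsto {g : ℕ → ℝ} {l : ℝ} (hg : Monotone g)
    (h : Tendsto g atTop (𝓝 l)) : HasSum (fun j => g (j + 1) - g j) (l - g 0) := by
  refine (hasSum_iff_tendsto_nat_of_nonneg (fun j => sub_nonneg.2 (hg j.le_succ)) _).2 ?_
  simpa only [Finset.sum_range_sub] using h.sub_const (g 0)

section AntitonePartition

variable {a : ℕ → ℝ}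

theorem iUnion_Ico_succ_eq_Ioo (ha : Antitone a) (ha_pos : ∀ j, 0 < a j)
    (ha_lim : Tendsto a atTop (𝓝 0)) : ⋃ j, Ico (a (j + 1)) (a j) = Ioo 0 (a 0) := by
  ext x
  simp only [mem_iUnion, mem_Ico, mem_Ioo]
  constructor
  · rintro ⟨j, hjx, hxj⟩
    exact ⟨(ha_pos _).trans_le hjx, hxj.trans_le (ha (Nat.zero_le j))⟩
  · rintro ⟨hx, hxa⟩
    have hex : ∃ n, a n ≤ x := ((ha_lim.eventually_lt_const hx).exists).imp fun _ => le_of_lt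
    obtain ⟨j, hj⟩ : ∃ j, Nat.find hex = j + 1 :=
      Nat.exists_eq_add_one.2 (Nat.pos_of_ne_zero fun h0 => (Nat.find_spec hex).not_gt (h0 ▸ hxa))
    exact ⟨j, hj ▸ Nat.find_spec hex, not_le.1 (Nat.find_min hex (hj ▸ j.lt_succ_self))⟩

theorem hasSum_setIntegral_Ico_succ {E : Type*} [NormedAddCommGroup E] [NormedSpace ℝ E]
    {f : ℝ → E} (ha : Antitone a) (ha_pos : ∀ j, 0 < a j) (ha_lim : Tendsto a atTop (𝓝 0))
    (hf : ∀ j, IntegrableOn f (Ico (a (j + 1)) (a j)))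
    (hf_sum : Summable fun j => ∫ x in Ico (a (j + 1)) (a j), ‖f x‖) :
    HasSum (fun j => ∫ x in Ico (a (j + 1)) (a j), f x) (∫ x in 0..a 0, f x) := by
  rw [integral_of_le (ha_pos 0).le, integral_Ioc_eq_integral_Ioo,
    ← iUnion_Ico_succ_eq_Ioo ha ha_pos ha_lim]
  exact hasSum_integral_iUnion (fun _ => measurableSet_Ico) ha.pairwise_disjoint_on_Ico_succ
    (integrableOn_iUnion_of_summable_integral_norm hf hf_sum)

theorem hasSum_integral_step_mul_one_sub_rpow {t : ℝ} (ht : 0 < t) (ha : Antitone a)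
    (ha_pos : ∀ j, 0 < a j) (ha_le : a 0 ≤ 1) (ha_lim : Tendsto a atTop (𝓝 0))
    {d : ℕ → ℝ} {B : ℝ} (hd : ∀ j, |d j| ≤ B) {f : ℝ → ℝ}
    (hf : ∀ j, EqOn f (fun _ => d j) (Ico (a (j + 1)) (a j))) :
    HasSum (fun j => ((1 - a (j + 1)) ^ t - (1 - a j) ^ t) * d j)
      (t * ∫ x in 0..a 0, f x * (1 - x) ^ (t - 1)) := by
  have ha_le_one : ∀ j, a j ≤ 1 := fun j => (ha (Nat.zero_le j)).trans ha_le
  have hg : Monotone fun j => (1 - a j) ^ t := fun i j hij =>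
    Real.rpow_le_rpow (by linarith [ha_le_one i]) (by linarith [ha hij]) ht.le
  have hw : HasSum (fun j => (1 - a (j + 1)) ^ t - (1 - a j) ^ t) (1 - (1 - a 0) ^ t) :=
    hasSum_succ_sub_of_tendsto hg (by simpa using (ha_lim.const_sub 1).rpow_const (Or.inr ht.le))
  have hpiece : ∀ j, EqOn (fun x => f x * (1 - x) ^ (t - 1))
      (fun x => d j * (1 - x) ^ (t - 1)) (Ico (a (j + 1)) (a j)) :=
    fun j x hx => by simp only [hf j hx]
  have hint : ∀ j, ∫ x in Ico (a (j + 1)) (a j), f x * (1 - x) ^ (t - 1) =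
      d j * ((1 - a (j + 1)) ^ t - (1 - a j) ^ t) / t := fun j => by
    rw [setIntegral_congr_fun measurableSet_Ico (hpiece j), MeasureTheory.integral_const_mul,
      setIntegral_Ico_one_sub_rpow ht (ha j.le_succ), mul_div_assoc]
  have hnorm : ∀ j, ∫ x in Ico (a (j + 1)) (a j), ‖f x * (1 - x) ^ (t - 1)‖ =
      |d j| * ((1 - a (j + 1)) ^ t - (1 - a j) ^ t) / t := fun j => by
    rw [setIntegral_congr_fun measurableSet_Ico (g := fun x => |d j| * (1 - x) ^ (t - 1)),
      MeasureTheory.integral_const_mul, setIntegral_Ico_one_sub_rpow ht (ha j.le_succ),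
      mul_div_assoc]
    intro x hx
    have hx1 : 0 ≤ 1 - x := by linarith [hx.2, ha_le_one j]
    simp only [hf j hx, norm_mul, Real.norm_eq_abs, abs_of_nonneg (Real.rpow_nonneg hx1 _)]
  have hsum : Summable fun j => |d j| * ((1 - a (j + 1)) ^ t - (1 - a j) ^ t) / t := by
    refine Summable.of_nonneg_of_le (fun j => ?_) (fun j => ?_)
      ((hw.summable.mul_left B).div_const t)
    · exact div_nonneg (mul_nonneg (abs_nonneg _) (sub_nonneg.2 (hg j.le_succ))) ht.le
    · exact div_le_div_of_nonneg_right
        (mul_le_mul_of_nonneg_right (hd j) (sub_nonneg.2 (hg j.le_succ))) ht.le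
  have key := hasSum_setIntegral_Ico_succ ha ha_pos ha_lim
    (fun j => IntegrableOn.congr_fun
      ((integrableOn_Ico_one_sub_rpow ht (ha j.le_succ)).const_mul (d j))
      (hpiece j).symm measurableSet_Ico)
    ((funext hnorm).symm ▸ hsum)
  simpa only [hint, mul_div_cancel₀ _ ht.ne', mul_comm (d _)] using key.mul_left t

end AntitonePartition

noncomputable def tailSum (c : ℕ → ℝ) (j : ℕ) : ℝ := ∑' i, c (j + i)

section TailSum

variable {c : ℕ → ℝ}

theorem sum_range_eq_sub_tailSum (hc : Summable c) (j : ℕ) :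
    ∑ i ∈ Finset.range j, c i = ∑' i, c i - tailSum c j := by
  rw [← hc.sum_add_tsum_nat_add j, tailSum]
  simp only [add_comm j, add_sub_cancel_right]

theorem antitone_tailSum (hc : Summable c) (h0 : ∀ i, 0 ≤ c i) : Antitone (tailSum c) := by
  refine antitone_nat_of_succ_le fun j => ?_
  have h := sum_range_eq_sub_tailSum hc (j + 1)
  rw [Finset.sum_range_succ, sum_range_eq_sub_tailSum hc j] at h
  linarith [h0 j]

theorem tailSum_pos (hc : Summable c) (hpos : ∀ i, 0 < c i) (j : ℕ) : 0 < tailSum c j :=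
  (hc.comp_injective (add_right_injective j)).tsum_pos (fun _ => (hpos _).le) 0 (hpos _)

theorem tendsto_tailSum (c : ℕ → ℝ) : Tendsto (tailSum c) atTop (𝓝 0) := by
  show Tendsto (fun j => ∑' i, c (j + i)) atTop (𝓝 0)
  simpa only [add_comm] using tendsto_sum_nat_add c

theorem hasSum_integral_step_tailSum {t : ℝ} (ht : 0 < t) (hc : Summable c)
    (hpos : ∀ i, 0 < c i) (hc_one : ∑' i, c i = 1) {d : ℕ → ℝ} {B : ℝ} (hd : ∀ j, |d j| ≤ B)
    {f : ℝ → ℝ} (hf : ∀ j, EqOn f (fun _ => d j) (Ico (tailSum c (j + 1)) (tailSum c j)))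
    (k : ℕ) :
    HasSum (fun j => ((1 - tailSum c (j + k + 1)) ^ t - (1 - tailSum c (j + k)) ^ t) * d (j + k))
      (t * ∫ x in 0..tailSum c k, f x * (1 - x) ^ (t - 1)) := by
  have hanti := antitone_tailSum hc fun i => (hpos i).le
  have h := hasSum_integral_step_mul_one_sub_rpow ht (a := fun j => tailSum c (j + k))
    (fun i j hij => hanti (Nat.add_le_add_right hij k)) (fun j => tailSum_pos hc hpos _)
    (by simpa [tailSum, hc_one] using hanti (Nat.zero_le k))
    ((tendsto_tailSum c).comp (tendsto_add_atTop_nat k)) (fun j => hd (j + k))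
    (fun j => by simpa only [Nat.add_right_comm] using hf (j + k))
  simpa only [Nat.add_right_comm _ 1 k, zero_add] using h

end TailSum

section MonotoneFamily

variable {α : Type*} {H : ℕ → Set α} {k : ℕ} {z : α}

theorem mem_iff_le_of_mem_of_not_mem_pred (hH : Monotone H) (hk : z ∈ H k)
    (hk' : k = 0 ∨ z ∉ H (k - 1)) (j : ℕ) : z ∈ H j ↔ k ≤ j := by
  refine ⟨fun hj => ?_, fun hkj => hH hkj hk⟩
  by_contra! hjk
  rcases hk' with rfl | hk'
  · exact Nat.not_lt_zero j hjk
  · exact hk' (hH (Nat.le_sub_one_of_lt hjk) hj)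

theorem hasSum_mul_ite_mem (hH : Monotone H) (hk : z ∈ H k) (hk' : k = 0 ∨ z ∉ H (k - 1))
    {w d : ℕ → ℝ} {s : ℝ} (h : HasSum (fun j => w (j + k) * d (j + k)) s) :
    HasSum (fun j => w j * if z ∈ H j then d j else 0) s := by
  have hmem := mem_iff_le_of_mem_of_not_mem_pred hH hk hk'
  refine (hasSum_nat_add_iff' k).1 ?_
  rw [Finset.sum_eq_zero fun i hi => ?_, sub_zero]
  · simpa only [(hmem _).2 (Nat.le_add_left k _), if_true] using h
  · rw [if_neg fun hi' => (Finset.mem_range.1 hi).not_ge ((hmem i).1 hi'), mul_zero]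

end MonotoneFamily

theorem stmt_19_general {G : Type*} [Group G]
    (H : ℕ → Subgroup G)
    (hlt : ∀ k, H k < H (k + 1))
    (c : ℕ → ℝ) (hc : ∀ k, 0 < c k) (hcsum : ∑' k : ℕ, c k = 1)
    (m : ℕ → G → ℝ)
    (hm : ∀ (k : ℕ) (x : G),
      m k x = if x ∈ H k then ((Nat.card (H k) : ℝ))⁻¹ else 0)
    (σ : ℕ → ℝ) (hσ : ∀ k, σ k = ∑' i : ℕ, c (k + 1 + i))
    (S : ℕ → ℝ) (hS : ∀ k, S k = ∑ i ∈ Finset.range (k + 1), c i)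
    (C : ℝ → ℕ → ℝ) (hC0 : ∀ t : ℝ, C t 0 = c 0 ^ t)
    (hCk : ∀ (t : ℝ) (k : ℕ), C t (k + 1) = S (k + 1) ^ t - S k ^ t)
    (μt : ℝ → G → ℝ) (hμt : ∀ (t : ℝ) (x : G), μt t x = ∑' k : ℕ, C t k * m k x)
    (N : ℝ → ℝ)
    (hN1 : ∀ (k : ℕ) (u : ℝ), σ (k + 1) ≤ u → u < σ k →
      N u = ((Nat.card (H (k + 1)) : ℝ))⁻¹)
    (hN2 : ∀ u : ℝ, σ 0 ≤ u → N u = ((Nat.card (H 0) : ℝ))⁻¹) :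
    ∀ t : ℝ, 0 < t → ∀ (k : ℕ) (z : G), z ∈ H k → (k = 0 ∨ z ∉ H (k - 1)) →
      μt t z = t * ∫ l in (0 : ℝ)..(if k = 0 then 1 else σ (k - 1)),
        N l * (1 - l) ^ (t - 1) := by
  intro t ht k z hzk hzk'
  have hc_sum : Summable c := by
    by_contra h
    simp [tsum_eq_zero_of_not_summable h] at hcsum
  have ha_zero : tailSum c 0 = 1 := by simpa only [tailSum, zero_add] using hcsum
  have hσ_eq : σ = fun j => tailSum c (j + 1) := funext hσ
  have hS_eq : ∀ j, S j = 1 - tailSum c (j + 1) := fun j => by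
    rw [hS, sum_range_eq_sub_tailSum hc_sum, hcsum]
  have hC_eq : ∀ j, C t j = (1 - tailSum c (j + 1)) ^ t - (1 - tailSum c j) ^ t := by
    rintro (_ | j)
    · rw [hC0, ← Finset.sum_range_one c, ← hS, hS_eq, ha_zero, sub_self,
        Real.zero_rpow ht.ne', sub_zero]
    · rw [hCk, hS_eq, hS_eq]
  have hN_eq : ∀ j, EqOn N (fun _ => ((Nat.card (H j) : ℝ))⁻¹)
      (Ico (tailSum c (j + 1)) (tailSum c j)) := by
    rintro (_ | j) u hu
    · exact hN2 u (hσ_eq ▸ hu.1)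
    · exact hN1 j u (hσ_eq ▸ hu.1) (hσ_eq ▸ hu.2)
  have hcard : ∀ j, |((Nat.card (H j) : ℝ))⁻¹| ≤ 1 := fun j =>
    (abs_of_nonneg (by positivity)).trans_le (Nat.cast_inv_le_one _)
  have hbound : (if k = 0 then 1 else σ (k - 1)) = tailSum c k := by
    rcases k with _ | k
    exacts [ha_zero.symm, hσ k]
  rw [hμt, hbound]
  simp only [hm]
  exact (hasSum_mul_ite_mem (H := fun j => (H j : Set G))
    (monotone_nat_of_le_succ fun j => (hlt j).le) hzk hzk'
    (by simpa only [hC_eq] using hasSum_integral_step_tailSum ht hc_sum hc hcsum hcard hN_eq k)).tsum_eq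

/-- Proposition 8.5 (exact heat kernel formula): for `t > 0` and
`z ∈ G_k \ G_{k-1}` (with `G_{-1} = ∅`, `σ(-1) = 1`),
`μ_t(z) = t ∫₀^{σ(k-1)} N(λ)(1-λ)^{t-1} dλ`. -/
theorem stmt_19 {G : Type*} [Group G]
    (H : ℕ → Subgroup G) (hfin : ∀ k, (H k : Set G).Finite)
    (hlt : ∀ k, H k < H (k + 1)) (hunion : ∀ x : G, ∃ k, x ∈ H k)
    (c : ℕ → ℝ) (hc : ∀ k, 0 < c k) (hcsum : ∑' k : ℕ, c k = 1)
    (m : ℕ → G → ℝ)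
    (hm : ∀ (k : ℕ) (x : G),
      m k x = if x ∈ H k then ((Nat.card (H k) : ℝ))⁻¹ else 0)
    (σ : ℕ → ℝ) (hσ : ∀ k, σ k = ∑' i : ℕ, c (k + 1 + i))
    (S : ℕ → ℝ) (hS : ∀ k, S k = ∑ i ∈ Finset.range (k + 1), c i)
    (C : ℝ → ℕ → ℝ) (hC0 : ∀ t : ℝ, C t 0 = c 0 ^ t)
    (hCk : ∀ (t : ℝ) (k : ℕ), C t (k + 1) = S (k + 1) ^ t - S k ^ t)
    (μt : ℝ → G → ℝ) (hμt : ∀ (t : ℝ) (x : G), μt t x = ∑' k : ℕ, C t k * m k x)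
    (N : ℝ → ℝ)
    (hN1 : ∀ (k : ℕ) (u : ℝ), σ (k + 1) ≤ u → u < σ k →
      N u = ((Nat.card (H (k + 1)) : ℝ))⁻¹)
    (hN2 : ∀ u : ℝ, σ 0 ≤ u → N u = ((Nat.card (H 0) : ℝ))⁻¹) :
    ∀ t : ℝ, 0 < t → ∀ (k : ℕ) (z : G), z ∈ H k → (k = 0 ∨ z ∉ H (k - 1)) →
      μt t z = t * ∫ l in (0 : ℝ)..(if k = 0 then 1 else σ (k - 1)),
        N l * (1 - l) ^ (t - 1) :=
  stmt_19_general H hlt c hc hcsum m hm σ hσ S hS C hC0 hCk μt hμt N hN1 hN2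
end
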